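/- Let (ξ_n)_{n ≥ 1} be square-integrable real-valued random variables on a probability space. Suppose there exist constants C > 0, γ > 0, α ∈ (0,1], a real number σ², and a real sequence (c_k)_{k ≥ 1} such that: (i) |Var(ξ_n) − σ²| ≤ C e^{−γ n^α} for all n ≥ 1; (ii) |Cov(ξ_j, ξ_n) − c_{n−j}| ≤ C e^{−γ j^α} for all 1 ≤ j < n; and (iii) |Cov(ξ_j, ξ_n)| ≤ C e^{−γ (n−j)^α} for all 1 ≤ j < n. Then the series ∑_{k ≥ 1} c_k converges absolutely, and (1/N)·Var(∑_{n=1}^N ξ_n) converges as N → ∞ to σ² + 2·∑_{k ≥ 1} c_k. -/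

import Mathlib

/-!
By bilinearity, `Var(ξ₁ + ⋯ + ξ_N) = ∑_{n ≤ N} Var(ξ_n) + 2 ∑_{n ≤ N} r_n` with
`r_n = ∑_{1 ≤ j < n} Cov(ξ_j, ξ_n)`. By (i), `Var(ξ_n) → σ²`. Indexing `r_n` by the lag
`k = n - j`, its `k`-th term tends to `c_k` as `n → ∞` by (ii) and is bounded by the summable
`C e^{-γ k^α}` by (iii), so Tannery's theorem gives `r_n → ∑_k c_k` (and `|c_k| ≤ C e^{-γ k^α}`).
Dividing by `N` is Cesàro averaging, which preserves both limits.
-/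

open MeasureTheory ProbabilityTheory Filter

/-- The covariance of two real random variables. -/
noncomputable def cov {Ω : Type*} [MeasurableSpace Ω] (X Y : Ω → ℝ) (P : Measure Ω) : ℝ :=
  ∫ ω, (X ω - ∫ ω', X ω' ∂P) * (Y ω - ∫ ω', Y ω' ∂P) ∂P

open Topology

lemma summable_exp_neg_mul_rpow {b α : ℝ} (hb : 0 < b) (hα : 0 < α) :
    Summable fun k : ℕ => Real.exp (-b * (k : ℝ) ^ α) := by
  have hpow : Tendsto (fun k : ℕ => (k : ℝ) ^ α) atTop atTop :=
    (tendsto_rpow_atTop hα).comp tendsto_natCast_atTop_atTop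
  have hlo := (isLittleO_exp_neg_mul_rpow_atTop hb (-2 / α)).comp_tendsto hpow
  refine summable_of_isBigO_nat (Real.summable_nat_rpow.2 (by norm_num : (-2 : ℝ) < -1))
    (hlo.isBigO.congr_right fun k => ?_)
  rw [Function.comp_apply, ← Real.rpow_mul (Nat.cast_nonneg k), mul_div_cancel₀ _ hα.ne']

lemma tendsto_of_eventually_abs_sub_le {u e : ℕ → ℝ} {l : ℝ} (he : Tendsto e atTop (𝓝 0))
    (hu : ∀ᶠ n in atTop, |u n - l| ≤ e n) : Tendsto u atTop (𝓝 l) :=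
  tendsto_iff_norm_sub_tendsto_zero.2 (squeeze_zero_norm' (by simpa using hu) he)

lemma Filter.Tendsto.cesaro_Icc {u : ℕ → ℝ} {l : ℝ} (h : Tendsto u atTop (𝓝 l)) :
    Tendsto (fun N : ℕ => (∑ n ∈ Finset.Icc 1 N, u n) / N) atTop (𝓝 l) := by
  refine (h.comp (tendsto_add_atTop_nat 1)).cesaro.congr fun N => ?_
  simp only [Function.comp_apply]
  rw [Finset.range_eq_Ico, Finset.sum_Ico_add' u, ← Finset.Ico_add_one_right_eq_Icc,
    inv_mul_eq_div]

lemma sum_Ico_one_eq_tsum_lag {M : Type*} [AddCommMonoid M] [TopologicalSpace M] (f : ℕ → M)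
    (n : ℕ) :
    ∑ j ∈ Finset.Ico 1 n, f j = ∑' k, if k + 1 < n then f (n - (k + 1)) else 0 := by
  rw [tsum_eq_sum (s := Finset.range (n - 1)) fun k hk => if_neg (by simp at hk; omega),
    Finset.sum_ite_of_true fun k hk => by simp at hk; omega]
  refine Finset.sum_nbij' (fun j => n - 1 - j) (fun k => n - (k + 1)) ?_ ?_ ?_ ?_ ?_ <;>
    intro j hj <;> simp at hj ⊢ <;> first | omega | congr 1; omega

lemma tendsto_sum_Ico_of_dominated {a : ℕ → ℕ → ℝ} {b c : ℕ → ℝ} (hb : Summable b)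
    (hlim : ∀ k, 1 ≤ k → Tendsto (fun n => a (n - k) n) atTop (𝓝 (c k)))
    (hdom : ∀ j n, 1 ≤ j → j < n → |a j n| ≤ b (n - j)) :
    Summable (fun k => |c (k + 1)|) ∧
      Tendsto (fun n => ∑ j ∈ Finset.Ico 1 n, a j n) atTop (𝓝 (∑' k, c (k + 1))) := by
  set F : ℕ → ℕ → ℝ := fun n k => if k + 1 < n then a (n - (k + 1)) n else 0
  have hF (k : ℕ) : Tendsto (F · k) atTop (𝓝 (c (k + 1))) :=
    (hlim (k + 1) k.succ_pos).congr' <|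
      (eventually_gt_atTop (k + 1)).mono fun n hn => (if_pos hn).symm
  have hFb (n k : ℕ) : |F n k| ≤ b (k + 1) := by
    by_cases hk : k + 1 < n
    · simpa [F, hk, Nat.sub_sub_self hk.le] using hdom (n - (k + 1)) n (by omega) (by omega)
    -- `b (k + 1)` bounds `|a 1 (k + 2)|`, hence is nonnegative
    · simpa [F, hk] using (abs_nonneg _).trans (hdom 1 (k + 2) le_rfl (by omega))
  have hc (k : ℕ) : |c (k + 1)| ≤ b (k + 1) :=
    le_of_tendsto (hF k).abs (Eventually.of_forall fun n => hFb n k)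
  have hb' : Summable fun k => b (k + 1) := (summable_nat_add_iff 1).2 hb
  refine ⟨hb'.of_nonneg_of_le (fun _ => abs_nonneg _) hc, ?_⟩
  simp only [sum_Ico_one_eq_tsum_lag]
  exact tendsto_tsum_of_dominated_convergence hb' hF (Eventually.of_forall hFb)

lemma sum_Icc_sum_Icc_of_symmetric {M : Type*} [AddCommMonoid M] {g : ℕ → ℕ → M}
    (hg : ∀ i j, g i j = g j i) (N : ℕ) :
    ∑ i ∈ Finset.Icc 1 N, ∑ j ∈ Finset.Icc 1 N, g i j =
      ∑ n ∈ Finset.Icc 1 N, g n n + 2 • ∑ n ∈ Finset.Icc 1 N, ∑ j ∈ Finset.Ico 1 n, g j n := by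
  induction N with
  | zero => simp
  | succ N ih =>
    have hIcc (f : ℕ → M) :
        ∑ i ∈ Finset.Icc 1 (N + 1), f i = ∑ i ∈ Finset.Icc 1 N, f i + f (N + 1) :=
      Finset.sum_Icc_succ_top (by omega) f
    simp only [hIcc, Finset.sum_add_distrib, ih, Finset.Ico_add_one_right_eq_Icc, hg (N + 1),
      smul_add, two_nsmul]
    abel

lemma variance_sum_Icc {Ω : Type*} [MeasurableSpace Ω] {P : Measure Ω} [IsFiniteMeasure P]
    {X : ℕ → Ω → ℝ} {N : ℕ} (hX : ∀ n ∈ Finset.Icc 1 N, MemLp (X n) 2 P) :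
    Var[fun ω => ∑ n ∈ Finset.Icc 1 N, X n ω; P] =
      ∑ n ∈ Finset.Icc 1 N, Var[X n; P] +
        2 * ∑ n ∈ Finset.Icc 1 N, ∑ j ∈ Finset.Ico 1 n, cov[X j, X n; P] := by
  rw [variance_fun_sum' hX, sum_Icc_sum_Icc_of_symmetric (fun _ _ => covariance_comm _ _),
    nsmul_eq_mul, Nat.cast_ofNat]
  congr 1
  exact Finset.sum_congr rfl fun n hn => covariance_self (hX n hn).aemeasurable

lemma cov_eq_covariance {Ω : Type*} [MeasurableSpace Ω] (X Y : Ω → ℝ) (P : Measure Ω) :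
    cov X Y P = cov[X, Y; P] :=
  rfl

theorem variance_rate_of_weakly_dependent_general
    {Ω : Type*} [MeasurableSpace Ω] {P : Measure Ω} [IsProbabilityMeasure P]
    (ξ : ℕ → Ω → ℝ) (hℒ2 : ∀ n : ℕ, 1 ≤ n → MemLp (ξ n) 2 P)
    (C γ α σ2 : ℝ) (c : ℕ → ℝ)
    (hγ : 0 < γ) (hα : α ∈ Set.Ioc (0 : ℝ) 1)
    (hvar : ∀ n : ℕ, 1 ≤ n →
      |variance (ξ n) P - σ2| ≤ C * Real.exp (-γ * (n : ℝ) ^ α))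
    (hcov_st : ∀ j n : ℕ, 1 ≤ j → j < n →
      |cov (ξ j) (ξ n) P - c (n - j)| ≤ C * Real.exp (-γ * (j : ℝ) ^ α))
    (hcov_mix : ∀ j n : ℕ, 1 ≤ j → j < n →
      |cov (ξ j) (ξ n) P| ≤ C * Real.exp (-γ * ((n : ℝ) - (j : ℝ)) ^ α)) :
    Summable (fun k : ℕ => |c (k + 1)|) ∧
    Tendsto (fun N : ℕ => variance (fun ω => ∑ n ∈ Finset.Icc 1 N, ξ n ω) P / (N : ℝ))
      atTop (nhds (σ2 + 2 * ∑' k : ℕ, c (k + 1))) := by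
  simp only [cov_eq_covariance] at hcov_st hcov_mix
  have hbound := (summable_exp_neg_mul_rpow hγ hα.1).mul_left C
  have hdiag : Tendsto (fun n => Var[ξ n; P]) atTop (𝓝 σ2) :=
    tendsto_of_eventually_abs_sub_le hbound.tendsto_atTop_zero
      ((eventually_ge_atTop 1).mono hvar)
  have hlim (k : ℕ) (hk : 1 ≤ k) : Tendsto (fun n => cov[ξ (n - k), ξ n; P]) atTop (𝓝 (c k)) :=
    tendsto_of_eventually_abs_sub_le (hbound.tendsto_atTop_zero.comp (tendsto_sub_atTop_nat k)) <|
      (eventually_gt_atTop k).mono fun n hn => by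
        simpa [Nat.sub_sub_self hn.le] using hcov_st (n - k) n (by omega) (by omega)
  have hdom (j n : ℕ) (hj : 1 ≤ j) (hjn : j < n) :
      |cov[ξ j, ξ n; P]| ≤ C * Real.exp (-γ * ((n - j : ℕ) : ℝ) ^ α) := by
    simpa [Nat.cast_sub hjn.le] using hcov_mix j n hj hjn
  obtain ⟨hsum, hrow⟩ := tendsto_sum_Ico_of_dominated hbound hlim hdom
  refine ⟨hsum, (hdiag.cesaro_Icc.add (hrow.cesaro_Icc.const_mul 2)).congr fun N => ?_⟩
  rw [variance_sum_Icc fun n hn => hℒ2 n (Finset.mem_Icc.1 hn).1]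
  ring

/-- **Limiting variance rate for a weakly dependent stationary-like sequence.**
If `(ξ_n)_{n≥1}` are square-integrable with `|Var(ξ_n) − σ²| ≤ C e^{−γ n^α}`,
`|Cov(ξ_j, ξ_n) − c_{n−j}| ≤ C e^{−γ j^α}` and `|Cov(ξ_j, ξ_n)| ≤ C e^{−γ (n−j)^α}`
for `1 ≤ j < n`, then `∑_{k≥1} c_k` converges absolutely and
`Var(∑_{n=1}^N ξ_n)/N → σ² + 2 ∑_{k≥1} c_k`. -/
theorem variance_rate_of_weakly_dependent
    {Ω : Type*} [MeasurableSpace Ω] {P : Measure Ω} [IsProbabilityMeasure P]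
    (ξ : ℕ → Ω → ℝ) (hℒ2 : ∀ n : ℕ, 1 ≤ n → MemLp (ξ n) 2 P)
    (C γ α σ2 : ℝ) (c : ℕ → ℝ)
    (hC : 0 < C) (hγ : 0 < γ) (hα : α ∈ Set.Ioc (0 : ℝ) 1)
    (hvar : ∀ n : ℕ, 1 ≤ n →
      |variance (ξ n) P - σ2| ≤ C * Real.exp (-γ * (n : ℝ) ^ α))
    (hcov_st : ∀ j n : ℕ, 1 ≤ j → j < n →
      |cov (ξ j) (ξ n) P - c (n - j)| ≤ C * Real.exp (-γ * (j : ℝ) ^ α))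
    (hcov_mix : ∀ j n : ℕ, 1 ≤ j → j < n →
      |cov (ξ j) (ξ n) P| ≤ C * Real.exp (-γ * ((n : ℝ) - (j : ℝ)) ^ α)) :
    Summable (fun k : ℕ => |c (k + 1)|) ∧
    Tendsto (fun N : ℕ => variance (fun ω => ∑ n ∈ Finset.Icc 1 N, ξ n ω) P / (N : ℝ))
      atTop (nhds (σ2 + 2 * ∑' k : ℕ, c (k + 1))) :=
  variance_rate_of_weakly_dependent_general ξ hℒ2 C γ α σ2 c hγ hα hvar hcov_st hcov_mix
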